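/- arXiv:math/0701756 — 6 statements merged into one kernel-verified Lean document; each statement's English description precedes it below -/
import Mathlib

section
/- For every φ ∈ dom(A) and every z ∈ ℂ ∖ S_μ one has (Aφ)^(z) = z·φ̂(z); that is, the map Φ_μ : φ ↦ φ̂ intertwines A with multiplication by the independent variable on Φ_μ H. -/
open scoped ComplexConjugate
open Complex

noncomputable section

variable {H : Type*} [NormedAddCommGroup H] [InnerProductSpace ℂ H] [CompleteSpace H]

local notation "⟪" x ", " y "⟫" => @inner ℂ _ _ x y

/-- The range of `T - z·I`, as a subset of `H`. -/
def ranShift (T : H →ₗ.[ℂ] H) (z : ℂ) : Set H :=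
  Set.range fun φ : T.domain => T φ - z • (φ : H)

/-- `ψ` belongs to the kernel of `T - z·I`. -/
def InKerShift (T : H →ₗ.[ℂ] H) (z : ℂ) (ψ : H) : Prop :=
  ∃ h : ψ ∈ T.domain, T ⟨ψ, h⟩ = z • ψ

/-- `H = ran(A - z·I) ∔ span{μ}` (direct algebraic sum): every vector has a unique
decomposition `v = r + c • μ` with `r ∈ ran(A - z·I)`. -/
def GaugeSplit (A : H →ₗ.[ℂ] H) (μ : H) (z : ℂ) : Prop :=
  ∀ v : H, ∃! c : ℂ, v - c • μ ∈ ranShift A z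

/-- The exceptional set `S_μ`. -/
def Smu (A : H →ₗ.[ℂ] H) (μ : H) : Set ℂ := {z | ¬ GaugeSplit A μ z}

/-- `A` is simple: `⋂_{Im z ≠ 0} ran(A - z·I) = {0}`. -/
def IsSimpleOp (A : H →ₗ.[ℂ] H) : Prop :=
  (⋂ z ∈ {w : ℂ | w.im ≠ 0}, ranShift A z) = ({0} : Set H)

/-- `A` is regular: every `z ∈ ℂ` is a point of regular type, i.e. `A - z·I` has a
bounded inverse on its range. -/
def IsRegularOp (A : H →ₗ.[ℂ] H) : Prop :=
  ∀ z : ℂ, ∃ c : ℝ, 0 < c ∧ ∀ φ : A.domain, c * ‖(φ : H)‖ ≤ ‖A φ - z • (φ : H)‖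

/-- `A` has deficiency indices `(1,1)`: for every `z ∈ ℂ`, the kernel of `A* - z·I`
is spanned by a single nonzero vector. -/
def DefIndicesOneOne (A : H →ₗ.[ℂ] H) : Prop :=
  ∀ z : ℂ, ∃ v : H, v ≠ 0 ∧
    {ψ : H | InKerShift A.adjoint z ψ} = {w : H | ∃ c : ℂ, w = c • v}

/-- `A` is symmetric. -/
def IsSymmetricPOp (A : H →ₗ.[ℂ] H) : Prop :=
  ∀ x y : A.domain, ⟪(A x : H), (y : H)⟫ = ⟪(x : H), (A y : H)⟫

/-- The data of a densely defined, closed, symmetric, simple, regular operator with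
deficiency indices (1,1): the setting of Krein's theory. -/
structure KreinOp (H : Type*) [NormedAddCommGroup H] [InnerProductSpace ℂ H]
    [CompleteSpace H] where
  A : H →ₗ.[ℂ] H
  dense : Dense (A.domain : Set H)
  closed : A.IsClosed
  symm : IsSymmetricPOp A
  simple : IsSimpleOp A
  regular : IsRegularOp A
  defOneOne : DefIndicesOneOne A

/-- `B` is a self-adjoint extension of `A` (within `H`). -/
def IsSAExt (A B : H →ₗ.[ℂ] H) : Prop :=
  A ≤ B ∧ IsSelfAdjoint B

/-- `R z` is, for every `z ∈ res`, the (everywhere defined, bounded) inverse of `B - z·I`;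
in particular `res ⊆ ℂ ∖ Sp(B)`. -/
def IsResolventOn (B : H →ₗ.[ℂ] H) (res : Set ℂ) (R : ℂ → H →L[ℂ] H) : Prop :=
  ∀ z ∈ res, (∀ v : H, ∃ h : R z v ∈ B.domain, B ⟨R z v, h⟩ - z • R z v = v)
    ∧ ∀ φ : B.domain, R z ((B φ : H) - z • (φ : H)) = (φ : H)

/-- `ψ(z) = ψ₀ + (z - z₀)(B - z·I)⁻¹ ψ₀`. -/
def psiFun (R : ℂ → H →L[ℂ] H) (z₀ : ℂ) (ψ₀ : H) (z : ℂ) : H :=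
  ψ₀ + (z - z₀) • R z ψ₀

/-- `ξ(z) = ψ(z̄) / ⟪μ, ψ(z̄)⟫`. -/
def xiFun (μ : H) (R : ℂ → H →L[ℂ] H) (z₀ : ℂ) (ψ₀ : H) (z : ℂ) : H :=
  (⟪μ, psiFun R z₀ ψ₀ (conj z)⟫)⁻¹ • psiFun R z₀ ψ₀ (conj z)

/-- `P` is the orthogonal projection onto `Ker(B - x·I)`. -/
def IsEigenProjection (B : H →ₗ.[ℂ] H) (x : ℝ) (P : H →L[ℂ] H) : Prop :=
  IsSelfAdjoint P ∧ (∀ v : H, P (P v) = P v) ∧ ∀ v : H, (P v = v ↔ InKerShift B (x : ℂ) v)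


lemma sa_symm {B : H →ₗ.[ℂ] H} (h : IsSelfAdjoint B) (x y : B.domain) :
    ⟪(B x : H), (y : H)⟫ = ⟪(x : H), (B y : H)⟫ := by
  have hd : Dense (B.domain : Set H) := h.dense_domain
  have hf := LinearPMap.adjoint_isFormalAdjoint hd
  rw [LinearPMap.isSelfAdjoint_def] at h
  rw [h] at hf
  exact hf x y

/-- For every `φ ∈ dom(A)` and `z ∈ ℂ ∖ S_μ` (a regular point of the
chosen extension), `(Aφ)^(z) = z·φ̂(z)`: the map `Φ_μ : φ ↦ φ̂` intertwines `A` with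
multiplication by the independent variable. -/
theorem statement3 [TopologicalSpace.SeparableSpace H]
    (S : KreinOp H)
    (B : H →ₗ.[ℂ] H) (hB : IsSAExt S.A B)
    (res : Set ℂ) (R : ℂ → H →L[ℂ] H) (hR : IsResolventOn B res R)
    (z₀ : ℂ) (hz₀ : z₀ ∈ res)
    (ψ₀ : H) (hψ₀ne : ψ₀ ≠ 0) (hψ₀ : InKerShift S.A.adjoint z₀ ψ₀)
    (μ : H)
    (z : ℂ) (hz : z ∉ Smu S.A μ) (hz' : conj z ∈ res)
    (φ : S.A.domain) :
    ⟪xiFun μ R z₀ ψ₀ z, (S.A φ : H)⟫ = z * ⟪xiFun μ R z₀ ψ₀ z, (φ : H)⟫ := by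
  obtain ⟨hle, hsa⟩ := hB
  obtain ⟨hmem, hBr⟩ := (hR (conj z) hz').1 ψ₀
  have hφB : (φ : H) ∈ B.domain := hle.1 φ.2
  have hAB : (S.A φ : H) = B ⟨(φ : H), hφB⟩ := hle.2 rfl
  have hBr' : (B ⟨R (conj z) ψ₀, hmem⟩ : H) = ψ₀ + conj z • R (conj z) ψ₀ :=
    eq_add_of_sub_eq hBr
  have h1 : ⟪(R (conj z) ψ₀ : H), (S.A φ : H)⟫
      = ⟪ψ₀, (φ : H)⟫ + z * ⟪(R (conj z) ψ₀ : H), (φ : H)⟫ := by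
    rw [hAB, ← sa_symm hsa ⟨R (conj z) ψ₀, hmem⟩ ⟨(φ : H), hφB⟩, hBr', inner_add_left,
      inner_smul_left, Complex.conj_conj]
  obtain ⟨hm, he⟩ := hψ₀
  have h2 : ⟪ψ₀, (S.A φ : H)⟫ = conj z₀ * ⟪ψ₀, (φ : H)⟫ := by
    have h3 := LinearPMap.adjoint_isFormalAdjoint S.dense ⟨ψ₀, hm⟩ φ
    rw [he, inner_smul_left] at h3
    exact h3.symm
  simp only [xiFun, psiFun, inner_smul_left, inner_add_left, h1, h2, map_sub,
    Complex.conj_conj]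
  ring


end
end

section
/- Let A♯ be a self-adjoint extension of A and x ∈ ℝ ∖ S_μ an eigenvalue of A♯. Let ψ be defined using a different self-adjoint extension A♯′ of A with x ∉ Sp(A♯′). Then ξ(x) is well defined, nonzero, belongs to dom(A♯), and A♯ξ(x) = x·ξ(x); i.e., ξ(x) is an eigenvector of A♯ corresponding to x, and every eigenvector of A♯ for x is a scalar multiple of ξ(x). -/
open scoped ComplexConjugate
open Complex

noncomputable section

variable {H : Type*} [NormedAddCommGroup H] [InnerProductSpace ℂ H] [CompleteSpace H]

local notation "⟪" x ", " y "⟫" => @inner ℂ _ _ x y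

/-- A self-adjoint extension of `A` is contained in `A†`. -/
private lemma saext_le_adjoint {A B : H →ₗ.[ℂ] H} (hA : Dense (A.domain : Set H))
    (hB : IsSAExt A B) : B ≤ A.adjoint := by
  have heq : B.adjoint = B := hB.2
  have hle : B ≤ B.adjoint := le_of_eq heq.symm
  have hd : Dense (B.domain : Set H) := hB.2.dense_domain
  have hsymm : ∀ u v : B.domain, ⟪(B u : H), (v : H)⟫ = ⟪(u : H), (B v : H)⟫ := by
    intro u v
    have hu : (u : H) ∈ B.adjoint.domain := hle.1 u.2
    have h2 : B u = B.adjoint ⟨u, hu⟩ := hle.2 (x := u) (y := ⟨u, hu⟩) rfl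
    rw [h2]
    exact LinearPMap.adjoint_isFormalAdjoint hd ⟨(u : H), hu⟩ v
  have hfa : A.IsFormalAdjoint B := by
    intro u v
    have hu : (u : H) ∈ B.domain := hB.1.1 u.2
    have h2 : A u = B ⟨u, hu⟩ := hB.1.2 (x := u) (y := ⟨u, hu⟩) rfl
    rw [h2]
    exact hsymm ⟨(u : H), hu⟩ v
  exact hfa.le_adjoint hA

private lemma inKerShift_mono {A B : H →ₗ.[ℂ] H} (h : A ≤ B) {z : ℂ} {v : H}
    (hv : InKerShift A z v) : InKerShift B z v := by
  obtain ⟨hm, he⟩ := hv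
  refine ⟨h.1 hm, ?_⟩
  rw [← h.2 (x := ⟨v, hm⟩) (y := ⟨v, h.1 hm⟩) rfl]
  exact he

private lemma inKerShift_smul {B : H →ₗ.[ℂ] H} {z : ℂ} {v : H} (c : ℂ)
    (hv : InKerShift B z v) : InKerShift B z (c • v) := by
  obtain ⟨hm, he⟩ := hv
  refine ⟨B.domain.smul_mem c hm, ?_⟩
  have h2 : B ⟨c • v, B.domain.smul_mem c hm⟩ = c • B ⟨v, hm⟩ := B.map_smul c ⟨v, hm⟩
  rw [h2, he, smul_comm]

/-- Let `x ∈ ℝ ∖ S_μ` be an eigenvalue of the self-adjoint extension `A♯`,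
and let `ψ` be built from a different self-adjoint extension `A♯′` with `x ∉ Sp(A♯′)`.
Then `ξ(x)` is well defined (the denominator `⟪μ, ψ(x̄)⟫` is nonzero), nonzero, lies in
`dom(A♯)` with `A♯ ξ(x) = x·ξ(x)`, and spans the eigenspace of `A♯` at `x`. -/
theorem statement4 [TopologicalSpace.SeparableSpace H]
    (S : KreinOp H)
    (B B' : H →ₗ.[ℂ] H) (hB : IsSAExt S.A B) (hB' : IsSAExt S.A B') (hBB' : B ≠ B')
    (res' : Set ℂ) (R' : ℂ → H →L[ℂ] H) (hR' : IsResolventOn B' res' R')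
    (z₀ : ℂ) (hz₀ : z₀ ∈ res')
    (ψ₀ : H) (hψ₀ne : ψ₀ ≠ 0) (hψ₀ : InKerShift S.A.adjoint z₀ ψ₀)
    (μ : H)
    (x : ℝ) (hxS : (x : ℂ) ∉ Smu S.A μ)
    (hxev : ∃ v : H, v ≠ 0 ∧ InKerShift B (x : ℂ) v)
    (hxres' : (x : ℂ) ∈ res') :
    ⟪μ, psiFun R' z₀ ψ₀ (conj (x : ℂ))⟫ ≠ 0
    ∧ xiFun μ R' z₀ ψ₀ (x : ℂ) ≠ 0
    ∧ InKerShift B (x : ℂ) (xiFun μ R' z₀ ψ₀ (x : ℂ))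
    ∧ ∀ v : H, InKerShift B (x : ℂ) v → ∃ c : ℂ, v = c • xiFun μ R' z₀ ψ₀ (x : ℂ) := by
  obtain ⟨hψ₀m, hψ₀e⟩ := hψ₀
  obtain ⟨hw_mem, hw_eq⟩ := (hR' (x : ℂ) hxres').1 ψ₀
  set w : H := R' (x : ℂ) ψ₀ with hwdef
  set ψ : H := psiFun R' z₀ ψ₀ (x : ℂ) with hψdef
  have hψ_eq : ψ = ψ₀ + ((x : ℂ) - z₀) • w := rfl
  -- B' ⟨w⟩ = ψ₀ + x • w
  have hB'w : B' ⟨w, hw_mem⟩ = ψ₀ + (x : ℂ) • w := by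
    rw [sub_eq_iff_eq_add] at hw_eq
    exact hw_eq
  -- self-adjoint extensions are contained in the adjoint
  have hle' : B' ≤ S.A.adjoint := saext_le_adjoint S.dense hB'
  have hleB : B ≤ S.A.adjoint := saext_le_adjoint S.dense hB
  have hw' : w ∈ S.A.adjoint.domain := hle'.1 hw_mem
  have hAw : S.A.adjoint ⟨w, hw'⟩ = ψ₀ + (x : ℂ) • w := by
    rw [← hle'.2 (x := ⟨w, hw_mem⟩) (y := ⟨w, hw'⟩) rfl]
    exact hB'w
  -- ψ is in the kernel of A† - x
  have hψmem : ψ ∈ S.A.adjoint.domain := by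
    rw [hψ_eq]
    exact S.A.adjoint.domain.add_mem hψ₀m (S.A.adjoint.domain.smul_mem _ hw')
  have hkereq : S.A.adjoint ⟨ψ, hψmem⟩ = (x : ℂ) • ψ := by
    have e1 : S.A.adjoint ⟨ψ, hψmem⟩
        = S.A.adjoint ⟨ψ₀, hψ₀m⟩ + ((x : ℂ) - z₀) • S.A.adjoint ⟨w, hw'⟩ := by
      calc S.A.adjoint ⟨ψ, hψmem⟩
          = S.A.adjoint ((⟨ψ₀, hψ₀m⟩ : S.A.adjoint.domain) + ((x : ℂ) - z₀) • ⟨w, hw'⟩) := rfl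
        _ = _ := by rw [S.A.adjoint.map_add, S.A.adjoint.map_smul]
    rw [e1, hψ₀e, hAw, hψ_eq]
    module
  have hker : InKerShift S.A.adjoint (x : ℂ) ψ := ⟨hψmem, hkereq⟩
  -- ψ ≠ 0
  have hψne : ψ ≠ 0 := by
    by_cases hz : z₀ = (x : ℂ)
    · rw [hψ_eq, hz, sub_self, zero_smul, add_zero]
      exact hψ₀ne
    · intro h0
      rw [hψ_eq] at h0
      have hψ₀w : ψ₀ = (z₀ - (x : ℂ)) • w := by
        have := eq_neg_of_add_eq_zero_left h0
        rw [this, ← neg_smul, neg_sub]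
      have hwne : w ≠ 0 := by
        intro hw0
        rw [hw0, smul_zero] at hψ₀w
        exact hψ₀ne hψ₀w
      have hB'w2 : B' ⟨w, hw_mem⟩ = z₀ • w := by
        rw [hB'w, hψ₀w]
        module
      have := (hR' z₀ hz₀).2 ⟨w, hw_mem⟩
      rw [hB'w2, sub_self, map_zero] at this
      exact hwne this.symm
  -- deficiency indices: ψ spans Ker(A† - x)
  obtain ⟨v, hvne, hvspan⟩ := S.defOneOne (x : ℂ)
  have hψv : ∃ c : ℂ, ψ = c • v := by
    have h1 : ψ ∈ {w : H | ∃ c : ℂ, w = c • v} := by rw [← hvspan]; exact hker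
    exact h1
  obtain ⟨cψ, hcψ⟩ := hψv
  have hcψne : cψ ≠ 0 := by
    intro h0; rw [h0, zero_smul] at hcψ; exact hψne hcψ
  have hspanψ : ∀ u : H, InKerShift S.A.adjoint (x : ℂ) u → ∃ c : ℂ, u = c • ψ := by
    intro u hu
    have h1 : u ∈ {w : H | ∃ c : ℂ, w = c • v} := by rw [← hvspan]; exact hu
    obtain ⟨c, hc⟩ := h1
    refine ⟨c * cψ⁻¹, ?_⟩
    rw [hc, hcψ, smul_smul, mul_assoc, inv_mul_cancel₀ hcψne, mul_one]
  -- ψ is an eigenvector of B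
  obtain ⟨v₀, hv₀ne, hv₀⟩ := hxev
  obtain ⟨c₀, hc₀⟩ := hspanψ v₀ (inKerShift_mono hleB hv₀)
  have hc₀ne : c₀ ≠ 0 := by
    intro h0; rw [h0, zero_smul] at hc₀; exact hv₀ne hc₀
  have hψv₀ : ψ = c₀⁻¹ • v₀ := by
    rw [hc₀, smul_smul, inv_mul_cancel₀ hc₀ne, one_smul]
  have hψB : InKerShift B (x : ℂ) ψ := by
    rw [hψv₀]
    exact inKerShift_smul _ hv₀
  -- orthogonality to ran(A - x)
  have horto : ∀ r ∈ ranShift S.A (x : ℂ), ⟪ψ, r⟫ = 0 := by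
    rintro r ⟨φ, rfl⟩
    have hfa := LinearPMap.adjoint_isFormalAdjoint S.dense (⟨ψ, hψmem⟩ : S.A.adjoint.domain) φ
    simp only [inner_sub_right, inner_smul_right]
    rw [← hfa, hkereq, inner_smul_left, Complex.conj_ofReal, sub_self]
  -- the denominator is nonzero
  have hGS : GaugeSplit S.A μ (x : ℂ) := not_not.mp hxS
  have hd : ⟪μ, ψ⟫ ≠ 0 := by
    intro hd0
    have hμψ : ⟪ψ, μ⟫ = 0 := inner_eq_zero_symm.mp hd0
    have hall : ∀ u : H, ⟪ψ, u⟫ = 0 := by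
      intro u
      obtain ⟨c, hc, -⟩ := hGS u
      have hu : u = (u - c • μ) + c • μ := by abel
      rw [hu, inner_add_right, horto _ hc, inner_smul_right, hμψ, mul_zero, add_zero]
    exact hψne (inner_self_eq_zero.mp (hall ψ))
  -- assemble
  have hxieq : xiFun μ R' z₀ ψ₀ (x : ℂ) = (⟪μ, ψ⟫)⁻¹ • ψ := by
    simp only [xiFun, Complex.conj_ofReal, hψdef]
  refine ⟨?_, ?_, ?_, ?_⟩
  · rw [Complex.conj_ofReal]
    exact hd
  · rw [hxieq]
    exact smul_ne_zero (inv_ne_zero hd) hψne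
  · rw [hxieq]
    exact inKerShift_smul _ hψB
  · intro u hu
    obtain ⟨c, hc⟩ := hspanψ u (inKerShift_mono hleB hu)
    refine ⟨c * ⟪μ, ψ⟫, ?_⟩
    rw [hxieq, smul_smul, mul_assoc, mul_inv_cancel₀ hd, mul_one]
    exact hc

end
end

section
/- (Sampling formula.) Assume S_μ ∩ ℝ = ∅. Let A♯ be any self-adjoint extension of A with spectrum {x_n} (a countable set of simple eigenvalues whose normalized eigenvectors form an orthonormal basis of H). Then for every φ ∈ H, the function f(z) := φ̂(z) = ⟨ξ(z), φ⟩ satisfies f(z) = Σ_n ( ⟨ξ(z), ξ(x_n)⟩ / ‖ξ(x_n)‖² ) · f(x_n) for all z ∈ ℂ ∖ S_μ, and the series converges uniformly on compact subsets of ℂ ∖ S_μ. -/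
open scoped ComplexConjugate
open Complex

noncomputable section

variable {H : Type*} [NormedAddCommGroup H] [InnerProductSpace ℂ H] [CompleteSpace H]

local notation "⟪" x ", " y "⟫" => @inner ℂ _ _ x y

/-!
For a real sample point `x`, both `ξ(x)` and the eigenvector of `A♯` at `x` lie in the
one-dimensional space `Ker(A* - x)`, so `ξ(x n)` is a nonzero multiple of the unit vector `e n`
and the `n`-th term of the series is `⟪ξ(z), e n⟫ ⟪e n, φ⟫`. The sampling formula is then the
expansion of `φ` in the orthonormal basis `{e n}`, paired with `ξ(z)`. On a compact set `K` the
error of a partial sum is at most `sup_K ‖ξ‖ · ‖φ - ∑_{n ∈ s} ⟪e n, φ⟫ e n‖`, and `ξ` is bounded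
on `K` because the resolvent, hence `ψ` and `ξ`, is continuous; the normalisation of `ξ` makes
sense off `S_μ` because `ψ(z̄) ⊥ ran(A - z)`, so `⟪μ, ψ(z̄)⟫ = 0` would force `ψ(z̄) = 0`.
-/

open Filter Topology

lemma IsSAExt.le_adjoint {A B : H →ₗ.[ℂ] H} (hA : Dense (A.domain : Set H))
    (h : IsSAExt A B) : B ≤ A.adjoint := by
  have hB : B.IsFormalAdjoint B := by
    simpa only [LinearPMap.isSelfAdjoint_def.mp h.2] using
      LinearPMap.adjoint_isFormalAdjoint h.2.dense_domain
  refine LinearPMap.IsFormalAdjoint.le_adjoint hA fun a b => ?_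
  obtain ⟨a', ha', hAa⟩ := LinearPMap.exists_of_le h.1 a
  rw [hAa, ha']
  exact hB a' b

omit [CompleteSpace H] in
lemma InKerShift.of_le {T T' : H →ₗ.[ℂ] H} (hT : T ≤ T') {z : ℂ} {v : H}
    (h : InKerShift T z v) : InKerShift T' z v := by
  obtain ⟨hv, hTv⟩ := h
  exact ⟨hT.1 hv, (hT.2 (x := ⟨v, hv⟩) rfl).symm.trans hTv⟩

lemma DefIndicesOneOne.exists_eq_smul {A : H →ₗ.[ℂ] H} (hA : DefIndicesOneOne A) {z : ℂ}
    {u v : H} (hu : InKerShift A.adjoint z u) (hv : InKerShift A.adjoint z v) (hv0 : v ≠ 0) :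
    ∃ c : ℂ, u = c • v := by
  obtain ⟨w, -, hker⟩ := hA z
  obtain ⟨a, rfl⟩ : ∃ a : ℂ, u = a • w := (Set.ext_iff.mp hker u).mp hu
  obtain ⟨b, rfl⟩ : ∃ b : ℂ, v = b • w := (Set.ext_iff.mp hker v).mp hv
  have hb : b ≠ 0 := by rintro rfl; simp at hv0
  exact ⟨a / b, by rw [smul_smul, div_mul_cancel₀ a hb]⟩

lemma inner_eq_zero_of_mem_ranShift {A : H →ₗ.[ℂ] H} (hA : Dense (A.domain : Set H))
    {z : ℂ} {ψ r : H} (hψ : InKerShift A.adjoint (conj z) ψ) (hr : r ∈ ranShift A z) :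
    ⟪ψ, r⟫ = 0 := by
  obtain ⟨hψdom, hAψ⟩ := hψ
  obtain ⟨φ, rfl⟩ := hr
  have h := LinearPMap.adjoint_isFormalAdjoint hA ⟨ψ, hψdom⟩ φ
  rw [hAψ, inner_smul_left, conj_conj] at h
  simp only [inner_sub_right, inner_smul_right, ← h, sub_self]

omit [CompleteSpace H] in
lemma inner_ne_zero_of_gaugeSplit {A : H →ₗ.[ℂ] H} {μ ψ : H} {z : ℂ} (hz : GaugeSplit A μ z)
    (hψ : ψ ≠ 0) (horth : ∀ r ∈ ranShift A z, ⟪ψ, r⟫ = 0) : ⟪μ, ψ⟫ ≠ 0 := by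
  intro hμψ
  obtain ⟨c, hc, -⟩ := hz ψ
  have h := horth _ hc
  rw [inner_sub_right, inner_smul_right, inner_eq_zero_symm.mp hμψ, mul_zero, sub_zero] at h
  exact hψ (inner_self_eq_zero.mp h)

namespace IsResolventOn

variable {B : H →ₗ.[ℂ] H} {res : Set ℂ} {R : ℂ → H →L[ℂ] H} {z₀ : ℂ} {ψ₀ : H}

omit [CompleteSpace H]

lemma eq_zero_of_apply_eq_zero (hR : IsResolventOn B res R) {z : ℂ} (hz : z ∈ res) {v : H}
    (hv : R z v = 0) : v = 0 := by
  obtain ⟨hdom, hBv⟩ := (hR z hz).1 v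
  have h0 : (⟨R z v, hdom⟩ : B.domain) = 0 := Subtype.ext hv
  rw [← hBv, h0, LinearPMap.map_zero, hv, smul_zero, sub_zero]

lemma sub_eq_smul_comp (hR : IsResolventOn B res R) {u w : ℂ} (hu : u ∈ res)
    (hw : w ∈ res) : R u - R w = (u - w) • (R u).comp (R w) := by
  ext v
  obtain ⟨hdom, hBv⟩ := (hR w hw).1 v
  have h := (hR u hu).2 ⟨R w v, hdom⟩
  have hshift : (B ⟨R w v, hdom⟩ : H) - u • R w v = v - (u - w) • R w v := by
    rw [eq_add_of_sub_eq hBv]; module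
  have h' : R u v - (u - w) • R u (R w v) = R w v := by
    rwa [hshift, map_sub, map_smul] at h
  simp only [sub_apply, smul_apply, ContinuousLinearMap.comp_apply]
  linear_combination (norm := module) h'

lemma norm_le_two_mul (hR : IsResolventOn B res R) {u w : ℂ} (hu : u ∈ res) (hw : w ∈ res)
    (hclose : ‖u - w‖ * ‖R w‖ ≤ 1 / 2) : ‖R u‖ ≤ 2 * ‖R w‖ := by
  have hid : R u = R w + (u - w) • (R w).comp (R u) := by
    linear_combination (norm := module) -hR.sub_eq_smul_comp hw hu
  have hle : ‖R u‖ ≤ ‖R w‖ + ‖u - w‖ * (‖R w‖ * ‖R u‖) :=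
    calc ‖R u‖ = ‖R w + (u - w) • (R w).comp (R u)‖ := congrArg norm hid
      _ ≤ ‖R w‖ + ‖u - w‖ * ‖(R w).comp (R u)‖ := (norm_add_le _ _).trans_eq (by rw [norm_smul])
      _ ≤ ‖R w‖ + ‖u - w‖ * (‖R w‖ * ‖R u‖) := by gcongr; exact (R w).opNorm_comp_le (R u)
  nlinarith [norm_nonneg (R u)]

lemma continuousOn (hR : IsResolventOn B res R) : ContinuousOn R res := by
  intro w hw
  rw [ContinuousWithinAt, tendsto_iff_norm_sub_tendsto_zero]
  have hdist : Tendsto (fun u => ‖u - w‖ * ‖R w‖) (𝓝 w) (𝓝 0) := by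
    have h : Continuous fun u : ℂ => ‖u - w‖ * ‖R w‖ := by fun_prop
    simpa using h.tendsto w
  have hclose : ∀ᶠ u in 𝓝[res] w, u ∈ res ∧ ‖u - w‖ * ‖R w‖ < 1 / 2 :=
    (eventually_mem_nhdsWithin (a := w)).and
      (nhdsWithin_le_nhds (hdist.eventually (gt_mem_nhds (by norm_num))))
  have hbound : Tendsto (fun u => ‖u - w‖ * ‖R w‖ * (2 * ‖R w‖)) (𝓝[res] w) (𝓝 0) := by
    simpa using (hdist.mul_const (2 * ‖R w‖)).mono_left nhdsWithin_le_nhds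
  refine squeeze_zero' (Eventually.of_forall fun _ => norm_nonneg _)
    (hclose.mono fun u ⟨hu, hu'⟩ => ?_) hbound
  calc ‖R u - R w‖ = ‖u - w‖ * ‖(R u).comp (R w)‖ := by
        rw [hR.sub_eq_smul_comp hu hw, norm_smul]
    _ ≤ ‖u - w‖ * (2 * ‖R w‖ * ‖R w‖) := by
      gcongr
      exact ((R u).opNorm_comp_le (R w)).trans
        (by gcongr; exact hR.norm_le_two_mul hu hw hu'.le)
    _ = ‖u - w‖ * ‖R w‖ * (2 * ‖R w‖) := by ring

lemma continuousOn_psiFun (hR : IsResolventOn B res R) (z₀ : ℂ) (ψ₀ : H) :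
    ContinuousOn (psiFun R z₀ ψ₀) res :=
  continuousOn_const.add
    ((continuousOn_id.sub continuousOn_const).smul (hR.continuousOn.clm_apply continuousOn_const))

lemma continuousOn_xiFun (hR : IsResolventOn B res R) (μ : H) (z₀ : ℂ) (ψ₀ : H) :
    ContinuousOn (xiFun μ R z₀ ψ₀) {z | conj z ∈ res ∧ ⟪μ, psiFun R z₀ ψ₀ (conj z)⟫ ≠ 0} := by
  have hψ : ContinuousOn (fun z => psiFun R z₀ ψ₀ (conj z))
      {z | conj z ∈ res ∧ ⟪μ, psiFun R z₀ ψ₀ (conj z)⟫ ≠ 0} :=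
    (hR.continuousOn_psiFun z₀ ψ₀).comp Complex.continuous_conj.continuousOn fun _ hz => hz.1
  exact ((continuousOn_const.inner hψ).inv₀ fun _ hz => hz.2).smul hψ

lemma apply_psiFun (hR : IsResolventOn B res R) (hz₀ : z₀ ∈ res) {w : ℂ}
    (hw : w ∈ res) : R z₀ (psiFun R z₀ ψ₀ w) = R w ψ₀ := by
  have h := congrArg (fun T : H →L[ℂ] H => T ψ₀) (hR.sub_eq_smul_comp hz₀ hw)
  simp only [sub_apply, smul_apply, ContinuousLinearMap.comp_apply] at h
  simp only [psiFun, map_add, map_smul]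
  linear_combination (norm := module) h

lemma psiFun_ne_zero (hR : IsResolventOn B res R) (hz₀ : z₀ ∈ res)
    (hψ₀ : ψ₀ ≠ 0) {w : ℂ} (hw : w ∈ res) : psiFun R z₀ ψ₀ w ≠ 0 := by
  intro h
  refine hψ₀ (hR.eq_zero_of_apply_eq_zero hw ?_)
  rw [← hR.apply_psiFun hz₀ hw, h, map_zero]

end IsResolventOn

section Gauge

variable {A B : H →ₗ.[ℂ] H} {res : Set ℂ} {R : ℂ → H →L[ℂ] H} {z₀ : ℂ} {ψ₀ : H}

omit [CompleteSpace H] in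
lemma inKerShift_psiFun {T : H →ₗ.[ℂ] H} (hBT : B ≤ T) (hR : IsResolventOn B res R)
    (hψ₀ : InKerShift T z₀ ψ₀) {w : ℂ} (hw : w ∈ res) : InKerShift T w (psiFun R z₀ ψ₀ w) := by
  obtain ⟨hψ₀dom, hTψ₀⟩ := hψ₀
  obtain ⟨hRdom, hBR⟩ := (hR w hw).1 ψ₀
  have hTR : T ⟨R w ψ₀, hBT.1 hRdom⟩ = ψ₀ + w • R w ψ₀ :=
    (hBT.2 (x := ⟨_, hRdom⟩) rfl).symm.trans (eq_add_of_sub_eq hBR)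
  refine ⟨T.domain.add_mem hψ₀dom (T.domain.smul_mem _ (hBT.1 hRdom)), ?_⟩
  change T (⟨ψ₀, hψ₀dom⟩ + (w - z₀) • ⟨R w ψ₀, hBT.1 hRdom⟩) = _
  rw [LinearPMap.map_add, LinearPMap.map_smul, hTψ₀, hTR, psiFun]
  module

lemma inner_psiFun_ne_zero (hA : Dense (A.domain : Set H)) (hBA : B ≤ A.adjoint)
    (hR : IsResolventOn B res R) (hz₀ : z₀ ∈ res) (hψ₀ne : ψ₀ ≠ 0)
    (hψ₀ : InKerShift A.adjoint z₀ ψ₀) {μ : H} {z : ℂ} (hz : z ∉ Smu A μ)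
    (hzres : conj z ∈ res) : ⟪μ, psiFun R z₀ ψ₀ (conj z)⟫ ≠ 0 :=
  inner_ne_zero_of_gaugeSplit (not_not.mp hz) (hR.psiFun_ne_zero hz₀ hψ₀ne hzres)
    fun _ hr => inner_eq_zero_of_mem_ranShift hA (inKerShift_psiFun hBA hR hψ₀ hzres) hr

lemma xiFun_ofReal_eq_smul (hdef : DefIndicesOneOne A) (hA : Dense (A.domain : Set H))
    (hBA : B ≤ A.adjoint) (hR : IsResolventOn B res R) (hz₀ : z₀ ∈ res) (hψ₀ne : ψ₀ ≠ 0)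
    (hψ₀ : InKerShift A.adjoint z₀ ψ₀) {μ : H} {t : ℝ} (ht : (t : ℂ) ∉ Smu A μ)
    (htres : (t : ℂ) ∈ res) {e : H} (he : InKerShift A.adjoint t e) (he0 : e ≠ 0) :
    ∃ c : ℂ, c ≠ 0 ∧ xiFun μ R z₀ ψ₀ t = c • e := by
  have hμψ := inner_psiFun_ne_zero hA hBA hR hz₀ hψ₀ne hψ₀ ht (by rwa [conj_ofReal])
  rw [conj_ofReal] at hμψ
  obtain ⟨a, ha⟩ := hdef.exists_eq_smul (inKerShift_psiFun hBA hR hψ₀ htres) he he0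
  have ha0 : a ≠ 0 := by
    rintro rfl
    exact hR.psiFun_ne_zero hz₀ hψ₀ne htres (by rw [ha, zero_smul])
  refine ⟨(⟪μ, psiFun R z₀ ψ₀ t⟫)⁻¹ * a, mul_ne_zero (inv_ne_zero hμψ) ha0, ?_⟩
  rw [xiFun, conj_ofReal, ← smul_smul, ← ha]

end Gauge

omit [CompleteSpace H] in
lemma inner_div_sq_norm_mul_inner_smul {e : H} (he : ‖e‖ = 1) {c : ℂ} (hc : c ≠ 0) (u φ : H) :
    ⟪u, c • e⟫ / (‖c • e‖ : ℂ) ^ 2 * ⟪c • e, φ⟫ = ⟪u, e⟫ * ⟪e, φ⟫ := by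
  have hcc : conj c ≠ 0 := (map_ne_zero _).mpr hc
  rw [inner_smul_right, inner_smul_left, norm_smul, he, mul_one, ← Complex.mul_conj']
  field_simp

omit [CompleteSpace H] in
lemma tendstoUniformlyOn_inner_of_norm_le {α β : Type*} {l : Filter β} {f : α → H} {K : Set α}
    {M : ℝ} (hf : ∀ z ∈ K, ‖f z‖ ≤ M) {g : β → H} {v : H} (hg : Tendsto g l (𝓝 v)) :
    TendstoUniformlyOn (fun b z => ⟪f z, g b⟫) (fun z => ⟪f z, v⟫) l K := by
  rw [Metric.tendstoUniformlyOn_iff]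
  intro ε hε
  have hM : 0 < max M 0 + 1 := by positivity
  filter_upwards [Metric.tendsto_nhds.mp hg _ (div_pos hε hM)] with b hb z hz
  rw [dist_eq_norm, ← inner_sub_right]
  calc ‖⟪f z, v - g b⟫‖ ≤ ‖f z‖ * ‖v - g b‖ := norm_inner_le_norm _ _
    _ ≤ (max M 0 + 1) * ‖v - g b‖ := by
      gcongr; exact (hf z hz).trans ((le_max_left _ _).trans (le_add_of_nonneg_right zero_le_one))
    _ < (max M 0 + 1) * (ε / (max M 0 + 1)) := by
      gcongr; rwa [← dist_eq_norm, dist_comm]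
    _ = ε := mul_div_cancel₀ _ hM.ne'

theorem statement5_general
    (S : KreinOp H)
    (B : H →ₗ.[ℂ] H) (hB : IsSAExt S.A B)
    (ι : Type)
    (x : ι → ℝ)
    (e : ι → H) (he : ∀ n, e n ≠ 0 ∧ InKerShift B ((x n : ℂ)) (e n))
    (honb : Orthonormal ℂ e)
    (hcompl : ∀ v : H, HasSum (fun n => ⟪e n, v⟫ • e n) v)
    (B' : H →ₗ.[ℂ] H) (hB' : IsSAExt S.A B')
    (res' : Set ℂ) (R' : ℂ → H →L[ℂ] H) (hR' : IsResolventOn B' res' R')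
    (z₀ : ℂ) (hz₀ : z₀ ∈ res')
    (ψ₀ : H) (hψ₀ne : ψ₀ ≠ 0) (hψ₀ : InKerShift S.A.adjoint z₀ ψ₀)
    (μ : H) (hSmuR : ∀ t : ℝ, (t : ℂ) ∉ Smu S.A μ)
    (hxres' : ∀ n, ((x n : ℝ) : ℂ) ∈ res')
    (φ : H) :
    (∀ z : ℂ, z ∉ Smu S.A μ → conj z ∈ res' →
      HasSum
        (fun n =>
          (⟪xiFun μ R' z₀ ψ₀ z, xiFun μ R' z₀ ψ₀ ((x n : ℝ) : ℂ)⟫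
              / ((‖xiFun μ R' z₀ ψ₀ ((x n : ℝ) : ℂ)‖ : ℂ) ^ 2))
            * ⟪xiFun μ R' z₀ ψ₀ ((x n : ℝ) : ℂ), φ⟫)
        ⟪xiFun μ R' z₀ ψ₀ z, φ⟫)
    ∧ ∀ K : Set ℂ, IsCompact K → K ⊆ {z : ℂ | z ∉ Smu S.A μ ∧ conj z ∈ res'} →
        TendstoUniformlyOn
          (fun (s : Finset ι) (z : ℂ) => ∑ n ∈ s,
            (⟪xiFun μ R' z₀ ψ₀ z, xiFun μ R' z₀ ψ₀ ((x n : ℝ) : ℂ)⟫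
                / ((‖xiFun μ R' z₀ ψ₀ ((x n : ℝ) : ℂ)‖ : ℂ) ^ 2))
              * ⟪xiFun μ R' z₀ ψ₀ ((x n : ℝ) : ℂ), φ⟫)
          (fun z => ⟪xiFun μ R' z₀ ψ₀ z, φ⟫) Filter.atTop K := by
  have hB'A := hB'.le_adjoint S.dense
  have hterm : ∀ (u : H) (n : ι),
      ⟪u, xiFun μ R' z₀ ψ₀ (x n)⟫ / (‖xiFun μ R' z₀ ψ₀ (x n)‖ : ℂ) ^ 2
        * ⟪xiFun μ R' z₀ ψ₀ (x n), φ⟫ = ⟪u, ⟪e n, φ⟫ • e n⟫ := fun u n => by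
    obtain ⟨c, hc, hξ⟩ := xiFun_ofReal_eq_smul S.defOneOne S.dense hB'A hR' hz₀ hψ₀ne hψ₀
      (hSmuR (x n)) (hxres' n) ((he n).2.of_le (hB.le_adjoint S.dense)) (he n).1
    rw [hξ, inner_div_sq_norm_mul_inner_smul (honb.1 n) hc, inner_smul_right, mul_comm]
  refine ⟨fun z _ _ => ?_, fun K hK hKgood => ?_⟩
  · simpa only [hterm, innerSL_apply_apply] using
      (hcompl φ).mapL (innerSL ℂ (xiFun μ R' z₀ ψ₀ z))
  · obtain ⟨M, hM⟩ := hK.exists_bound_of_continuousOn <| (hR'.continuousOn_xiFun μ z₀ ψ₀).mono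
      fun z hz => ⟨(hKgood hz).2,
        inner_psiFun_ne_zero S.dense hB'A hR' hz₀ hψ₀ne hψ₀ (hKgood hz).1 (hKgood hz).2⟩
    simp only [hterm, ← inner_sum]
    exact tendstoUniformlyOn_inner_of_norm_le hM (hcompl φ)

/-- **Sampling formula.** Assume `S_μ ∩ ℝ = ∅` and let `A♯` be a self-adjoint
extension of `A` whose spectrum is a countable family of simple eigenvalues `{x n}` with
normalized eigenvectors `{e n}` forming an orthonormal basis of `H`. Then for every
`φ ∈ H`, `f(z) := φ̂(z) = ⟪ξ(z), φ⟫` satisfies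
`f(z) = Σ_n (⟪ξ(z), ξ(x n)⟫ / ‖ξ(x n)‖²) f(x n)` on `ℂ ∖ S_μ`, with uniform convergence
of the partial sums on compact subsets of `ℂ ∖ S_μ`. -/
theorem statement5 [TopologicalSpace.SeparableSpace H]
    (S : KreinOp H)
    (B : H →ₗ.[ℂ] H) (hB : IsSAExt S.A B)
    (ι : Type) [Countable ι]
    (x : ι → ℝ) (hxinj : Function.Injective x)
    (e : ι → H) (he : ∀ n, e n ≠ 0 ∧ InKerShift B ((x n : ℂ)) (e n))
    (honb : Orthonormal ℂ e)
    (hcompl : ∀ v : H, HasSum (fun n => ⟪e n, v⟫ • e n) v)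
    (B' : H →ₗ.[ℂ] H) (hB' : IsSAExt S.A B') (hBB' : B ≠ B')
    (res' : Set ℂ) (R' : ℂ → H →L[ℂ] H) (hR' : IsResolventOn B' res' R')
    (z₀ : ℂ) (hz₀ : z₀ ∈ res')
    (ψ₀ : H) (hψ₀ne : ψ₀ ≠ 0) (hψ₀ : InKerShift S.A.adjoint z₀ ψ₀)
    (μ : H) (hSmuR : ∀ t : ℝ, (t : ℂ) ∉ Smu S.A μ)
    (hxres' : ∀ n, ((x n : ℝ) : ℂ) ∈ res')
    (φ : H) :
    (∀ z : ℂ, z ∉ Smu S.A μ → conj z ∈ res' →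
      HasSum
        (fun n =>
          (⟪xiFun μ R' z₀ ψ₀ z, xiFun μ R' z₀ ψ₀ ((x n : ℝ) : ℂ)⟫
              / ((‖xiFun μ R' z₀ ψ₀ ((x n : ℝ) : ℂ)‖ : ℂ) ^ 2))
            * ⟪xiFun μ R' z₀ ψ₀ ((x n : ℝ) : ℂ), φ⟫)
        ⟪xiFun μ R' z₀ ψ₀ z, φ⟫)
    ∧ ∀ K : Set ℂ, IsCompact K → K ⊆ {z : ℂ | z ∉ Smu S.A μ ∧ conj z ∈ res'} →
        TendstoUniformlyOn
          (fun (s : Finset ι) (z : ℂ) => ∑ n ∈ s,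
            (⟪xiFun μ R' z₀ ψ₀ z, xiFun μ R' z₀ ψ₀ ((x n : ℝ) : ℂ)⟫
                / ((‖xiFun μ R' z₀ ψ₀ ((x n : ℝ) : ℂ)‖ : ℂ) ^ 2))
              * ⟪xiFun μ R' z₀ ψ₀ ((x n : ℝ) : ℂ), φ⟫)
          (fun z => ⟪xiFun μ R' z₀ ψ₀ z, φ⟫) Filter.atTop K :=
  statement5_general S B hB ι x e he honb hcompl B' hB' res' R' hR' z₀ hz₀ ψ₀ hψ₀ne hψ₀ μ hSmuR
    hxres' φ

end
end

section
/- Let A♯ be a self-adjoint extension of A, x_n an eigenvalue of A♯, P_n the orthogonal projection onto Ker(A♯ − x_nI), z₀ a point with Im z₀ ≠ 0, ψ₀ ∈ Ker(A* − z₀I) nonzero, and η(z) := (z − x_n)(A♯ − z₀I)(A♯ − zI)⁻¹ψ₀ (analytically extended to z = x_n). Then for every z ∈ ℂ ∖ Sp(A♯): ⟨η(z̄), η(x_n)⟩ = |x_n − z₀|² ⟨P_nψ₀, ψ₀⟩; in particular ⟨η(z̄), η(x_n)⟩ = ‖η(x_n)‖², independently of z. -/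
open scoped ComplexConjugate
open Complex

noncomputable section

variable {H : Type*} [NormedAddCommGroup H] [InnerProductSpace ℂ H] [CompleteSpace H]

local notation "⟪" x ", " y "⟫" => @inner ℂ _ _ x y

/-! The eigenvector `w = P ψ₀` has a real eigenvalue `xn`, so `B` can be moved across the inner
product: `⟪(B - ζ) r, w⟫ = (xn - ζ̄) ⟪r, w⟫` for every `r ∈ dom B`. With `r = (B - z̄)⁻¹ ψ₀`
this gives `⟪ψ₀, w⟫ = (xn - z) ⟪r, w⟫` for `ζ = z̄`, and the factor `xn - z̄₀` for `ζ = z₀`;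
together with `conj (z̄ - xn) = z - xn` the `z`-dependence cancels, leaving
`|xn - z₀|² ⟪ψ₀, P ψ₀⟫`. -/

theorem IsSelfAdjoint.isFormalAdjoint {𝕜 E : Type*} [RCLike 𝕜] [NormedAddCommGroup E]
    [InnerProductSpace 𝕜 E] [CompleteSpace E] {A : E →ₗ.[𝕜] E} (hA : IsSelfAdjoint A) :
    A.IsFormalAdjoint A := by
  simpa only [LinearPMap.isSelfAdjoint_def.mp hA] using
    LinearPMap.adjoint_isFormalAdjoint hA.dense_domain

theorem IsSelfAdjoint.norm_sq_map_eq_inner_of_idempotent {𝕜 E : Type*} [RCLike 𝕜]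
    [NormedAddCommGroup E] [InnerProductSpace 𝕜 E] [CompleteSpace E] {P : E →L[𝕜] E}
    (hP : IsSelfAdjoint P) (hidem : ∀ v, P (P v) = P v) (v : E) :
    (‖P v‖ : 𝕜) ^ 2 = inner 𝕜 (P v) v := by
  rw [← inner_self_eq_norm_sq_to_K]
  simpa only [ContinuousLinearMap.coe_coe, hidem] using (hP.isSymmetric (P v) v).symm

theorem IsSelfAdjoint.inner_map_sub_smul_of_inKerShift {B : H →ₗ.[ℂ] H} (hB : IsSelfAdjoint B)
    {x : ℝ} {w : H} (hw : InKerShift B x w) (r : B.domain) (ζ : ℂ) :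
    ⟪(B r : H) - ζ • (r : H), w⟫ = ((x : ℂ) - conj ζ) * ⟪(r : H), w⟫ := by
  obtain ⟨hwB, hBw⟩ := hw
  rw [inner_sub_left, inner_smul_left, hB.isFormalAdjoint r ⟨w, hwB⟩, hBw, inner_smul_right]
  ring

theorem statement8_general
    (S : KreinOp H)
    (B : H →ₗ.[ℂ] H) (hB : IsSAExt S.A B)
    (res : Set ℂ) (R : ℂ → H →L[ℂ] H) (hR : IsResolventOn B res R)
    (xn : ℝ)
    (P : H →L[ℂ] H) (hP : IsEigenProjection B xn P)
    (z₀ : ℂ)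
    (ψ₀ : H)
    (z : ℂ) (hz : conj z ∈ res) (h : R (conj z) ψ₀ ∈ B.domain) :
    ⟪(conj z - (xn : ℂ)) • ((B ⟨R (conj z) ψ₀, h⟩ : H) - z₀ • R (conj z) ψ₀),
        -((xn : ℂ) - z₀) • P ψ₀⟫
      = ((‖(xn : ℂ) - z₀‖ : ℂ) ^ 2) * ⟪P ψ₀, ψ₀⟫
    ∧ ⟪(conj z - (xn : ℂ)) • ((B ⟨R (conj z) ψ₀, h⟩ : H) - z₀ • R (conj z) ψ₀),
        -((xn : ℂ) - z₀) • P ψ₀⟫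
      = ((‖-((xn : ℂ) - z₀) • P ψ₀‖ : ℂ) ^ 2) := by
  have hPψ₀ : InKerShift B xn (P ψ₀) := (hP.2.2 _).mp (hP.2.1 ψ₀)
  have hψ₀ : ⟪ψ₀, P ψ₀⟫ = ((xn : ℂ) - z) * ⟪R (conj z) ψ₀, P ψ₀⟫ := by
    obtain ⟨_, hres⟩ := (hR _ hz).1 ψ₀
    simpa only [hres, conj_conj] using
      hB.2.inner_map_sub_smul_of_inKerShift hPψ₀ ⟨_, h⟩ (conj z)
  have hPsymm : ⟪P ψ₀, ψ₀⟫ = ⟪ψ₀, P ψ₀⟫ := hP.1.isSymmetric ψ₀ ψ₀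
  have hfirst : ⟪(conj z - (xn : ℂ)) • ((B ⟨R (conj z) ψ₀, h⟩ : H) - z₀ • R (conj z) ψ₀),
      -((xn : ℂ) - z₀) • P ψ₀⟫ = ((‖(xn : ℂ) - z₀‖ : ℂ) ^ 2) * ⟪P ψ₀, ψ₀⟫ := by
    rw [inner_smul_left, inner_smul_right,
      hB.2.inner_map_sub_smul_of_inKerShift hPψ₀ ⟨_, h⟩ z₀, hPsymm, hψ₀, ← mul_conj']
    simp only [map_sub, conj_conj, conj_ofReal]
    ring
  refine ⟨hfirst, hfirst.trans ?_⟩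
  rw [norm_smul, ofReal_mul, mul_pow, norm_neg]
  exact congrArg (_ * ·) (hP.1.norm_sq_map_eq_inner_of_idempotent hP.2.1 ψ₀).symm

/-- With `η(z) = (z - x_n)(A♯ - z₀·I)(A♯ - z·I)⁻¹ψ₀` and its analytic
extension value `η(x_n) = -(x_n - z₀) P_n ψ₀`, one has, for every `z ∉ Sp(A♯)`,
`⟪η(z̄), η(x_n)⟫ = |x_n - z₀|² ⟪P_n ψ₀, ψ₀⟫ = ‖η(x_n)‖²`, independently of `z`. -/
theorem statement8 [TopologicalSpace.SeparableSpace H]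
    (S : KreinOp H)
    (B : H →ₗ.[ℂ] H) (hB : IsSAExt S.A B)
    (res : Set ℂ) (R : ℂ → H →L[ℂ] H) (hR : IsResolventOn B res R)
    (xn : ℝ) (hxev : ∃ v : H, v ≠ 0 ∧ InKerShift B (xn : ℂ) v)
    (P : H →L[ℂ] H) (hP : IsEigenProjection B xn P)
    (z₀ : ℂ) (hz₀ : z₀.im ≠ 0) (hz₀res : z₀ ∈ res)
    (ψ₀ : H) (hψ₀ne : ψ₀ ≠ 0) (hψ₀ : InKerShift S.A.adjoint z₀ ψ₀)
    (z : ℂ) (hz : conj z ∈ res) (h : R (conj z) ψ₀ ∈ B.domain) :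
    ⟪(conj z - (xn : ℂ)) • ((B ⟨R (conj z) ψ₀, h⟩ : H) - z₀ • R (conj z) ψ₀),
        -((xn : ℂ) - z₀) • P ψ₀⟫
      = ((‖(xn : ℂ) - z₀‖ : ℂ) ^ 2) * ⟪P ψ₀, ψ₀⟫
    ∧ ⟪(conj z - (xn : ℂ)) • ((B ⟨R (conj z) ψ₀, h⟩ : H) - z₀ • R (conj z) ψ₀),
        -((xn : ℂ) - z₀) • P ψ₀⟫
      = ((‖-((xn : ℂ) - z₀) • P ψ₀‖ : ℂ) ^ 2) :=
  statement8_general S B hB res R hR xn P hP z₀ ψ₀ z hz h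

end
end

section
/- (Reality of the gauge yields de Branges condition (ii).) Let C be a complex conjugation on H, assume S_μ is invariant under complex conjugation of the variable (z ∈ S_μ iff z̄ ∈ S_μ), and assume Cξ(z) = ξ(z̄) for every z ∈ ℂ ∖ S_μ. Then for every φ ∈ H, the function f(z) := ⟨ξ(z), φ⟩ satisfies ⟨ξ(z), Cφ⟩ = conj(f(z̄)) for all z ∈ ℂ ∖ S_μ; hence the function f*(z) := conj(f(z̄)) belongs to Ĥ_μ := {φ̂ : φ ∈ H}, and ‖Cφ‖ = ‖φ‖, so f* has the same norm as f in any inner product on Ĥ_μ making Φ_μ an isometry. -/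
open scoped ComplexConjugate
open Complex

noncomputable section

variable {H : Type*} [NormedAddCommGroup H] [InnerProductSpace ℂ H] [CompleteSpace H]

local notation "⟪" x ", " y "⟫" => @inner ℂ _ _ x y

/-- A complex conjugation on `H`: a bijective antilinear map `C` with `C² = I` and
`⟪Cη, Cφ⟫ = ⟪φ, η⟫`. (Bijectivity follows from `C² = I`.) -/
structure IsConjugation (C : H → H) : Prop where
  add : ∀ u v : H, C (u + v) = C u + C v
  smul : ∀ (a : ℂ) (v : H), C (a • v) = conj a • C v
  invol : ∀ v : H, C (C v) = v
  inner_eq : ∀ u v : H, ⟪C u, C v⟫ = ⟪v, u⟫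

/-- **Reality of the gauge yields de Branges condition (ii).** If `S_μ` is
invariant under conjugation of the variable and `Cξ(z) = ξ(z̄)` on `ℂ ∖ S_μ`, then for every
`φ ∈ H` the function `f(z) = ⟪ξ(z), φ⟫` satisfies `⟪ξ(z), Cφ⟫ = conj(f(z̄))`; hence
`f*(z) := conj(f(z̄))` belongs to `Ĥ_μ`, and `‖Cφ‖ = ‖φ‖`, so `f*` has the same norm
as `f` in any inner product on `Ĥ_μ` making `Φ_μ` an isometry. -/
theorem statement17 [TopologicalSpace.SeparableSpace H]
    (S : KreinOp H)
    (C : H → H) (hC : IsConjugation C)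
    (B : H →ₗ.[ℂ] H) (hB : IsSAExt S.A B)
    (res : Set ℂ) (R : ℂ → H →L[ℂ] H) (hR : IsResolventOn B res R)
    (hresconj : ∀ w ∈ res, conj w ∈ res)
    (z₀ : ℂ) (hz₀ : z₀ ∈ res)
    (ψ₀ : H) (hψ₀ne : ψ₀ ≠ 0) (hψ₀ : InKerShift S.A.adjoint z₀ ψ₀)
    (μ : H)
    (hSmuconj : ∀ z : ℂ, z ∈ Smu S.A μ ↔ conj z ∈ Smu S.A μ)
    (hCξ : ∀ z : ℂ, z ∉ Smu S.A μ → z ∈ res →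
      C (xiFun μ R z₀ ψ₀ z) = xiFun μ R z₀ ψ₀ (conj z)) :
    (∀ φ : H, ‖C φ‖ = ‖φ‖)
    ∧ ∀ (φ : H) (z : ℂ), z ∉ Smu S.A μ → z ∈ res →
        ⟪xiFun μ R z₀ ψ₀ z, C φ⟫ = conj (⟪xiFun μ R z₀ ψ₀ (conj z), φ⟫) := by
  constructor
  · intro φ
    have h : ⟪C φ, C φ⟫ = ⟪φ, φ⟫ := hC.inner_eq φ φ
    have h1 : ‖C φ‖^2 = ‖φ‖^2 := by
      have h2 := congrArg (RCLike.re (K := ℂ)) h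
      rwa [inner_self_eq_norm_sq, inner_self_eq_norm_sq] at h2
    nlinarith [norm_nonneg (C φ), norm_nonneg φ, h1]
  · intro φ z hz hzres
    have hz' : conj z ∉ Smu S.A μ := fun h => hz ((hSmuconj z).mpr h)
    have hzres' : conj z ∈ res := hresconj z hzres
    have hx : C (xiFun μ R z₀ ψ₀ (conj z)) = xiFun μ R z₀ ψ₀ z := by
      have := hCξ (conj z) hz' hzres'
      simpa using this
    calc ⟪xiFun μ R z₀ ψ₀ z, C φ⟫
        = ⟪C (xiFun μ R z₀ ψ₀ (conj z)), C φ⟫ := by rw [hx]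
      _ = ⟪φ, xiFun μ R z₀ ψ₀ (conj z)⟫ := hC.inner_eq _ _
      _ = conj (⟪xiFun μ R z₀ ψ₀ (conj z), φ⟫) := (inner_conj_symm _ _).symm

end
end

section
/- (Kramer's sampling theorem.) Let I = [a, b] be a finite real interval and let K : I × ℝ → ℂ be such that K(·, x) ∈ L²(I, dy) for every x ∈ ℝ. Suppose there is a sequence {x_n}_{n ∈ ℤ} of real numbers such that {K(·, x_n)}_{ن ∈ ℤ} is an orthogonal basis of L²(I, dy) (a complete orthogonal system of nonzero elements). Let f(x) := ⟨K(·, x), g(·)⟩_{L²(I)} for some g ∈ L²(I, dy). Then for every x ∈ ℝ: f(x) = Σ_{n ∈ ℤ} ( ⟨K(·, x), K(·, x_n)⟩_{L²(I)} / ‖K(·, x_n)‖²_{L²(I)} ) · f(x_n), the series converging absolutely. -/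
open scoped ComplexConjugate
open Complex

noncomputable section

variable {H : Type*} [NormedAddCommGroup H] [InnerProductSpace ℂ H] [CompleteSpace H]

local notation "⟪" x ", " y "⟫" => @inner ℂ _ _ x y

/-!
Normalising the complete orthogonal family `K(·, xₙ)` gives a Hilbert basis `eₙ` of `L²(I)`,
and the sampling series is Parseval's identity `⟪u, w⟫ = Σₙ ⟪u, eₙ⟫ ⟪eₙ, w⟫` for
`u = K(·, t)`, `w = g`. Absolute convergence is Hölder's inequality in `ℓ²` applied to the
two square-summable coefficient sequences given by Bessel's inequality.
-/

open scoped InnerProductSpace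

section OrthogonalExpansion

variable {𝕜 E ι : Type*} [RCLike 𝕜] [NormedAddCommGroup E] [InnerProductSpace 𝕜 E]

theorem orthonormal_inv_norm_smul {v : ι → E}
    (horth : Pairwise fun i j => ⟪v i, v j⟫_𝕜 = 0) (hne : ∀ i, v i ≠ 0) :
    Orthonormal 𝕜 fun i => (‖v i‖⁻¹ : 𝕜) • v i := by
  refine ⟨fun i => norm_smul_inv_norm (hne i), fun i j hij => ?_⟩
  simp only [inner_smul_left, inner_smul_right, horth hij, mul_zero]

theorem orthogonal_span_range_smul_eq_bot {v : ι → E} {c : ι → 𝕜} (hc : ∀ i, c i ≠ 0)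
    (hcomplete : ∀ w : E, (∀ i, ⟪v i, w⟫_𝕜 = 0) → w = 0) :
    (Submodule.span 𝕜 (Set.range fun i => c i • v i))ᗮ = ⊥ := by
  rw [Submodule.eq_bot_iff]
  refine fun w hw => hcomplete w fun i => ?_
  have h := (Submodule.mem_orthogonal _ w).mp hw _ (Submodule.subset_span ⟨i, rfl⟩)
  rwa [inner_smul_left, mul_eq_zero, or_iff_right (by simpa using hc i)] at h

theorem inner_div_sq_norm_mul_inner (u v w : E) :
    ⟪u, v⟫_𝕜 / (‖v‖ : 𝕜) ^ 2 * ⟪v, w⟫_𝕜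
      = ⟪u, (‖v‖⁻¹ : 𝕜) • v⟫_𝕜 * ⟪(‖v‖⁻¹ : 𝕜) • v, w⟫_𝕜 := by
  simp only [inner_smul_left, inner_smul_right, RCLike.conj_inv, RCLike.conj_ofReal]
  ring

theorem HilbertBasis.summable_norm_inner_mul_inner [CompleteSpace E] (b : HilbertBasis ι 𝕜 E)
    (x y : E) : Summable fun i => ‖⟪x, b i⟫_𝕜 * ⟪b i, y⟫_𝕜‖ := by
  have hx : Summable fun i => ‖⟪x, b i⟫_𝕜‖ ^ (2 : ℝ) := by
    simpa only [Real.rpow_two, norm_inner_symm] using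
      b.orthonormal.inner_products_summable (x := x)
  have hy : Summable fun i => ‖⟪b i, y⟫_𝕜‖ ^ (2 : ℝ) := by
    simpa only [Real.rpow_two] using b.orthonormal.inner_products_summable (x := y)
  simpa only [norm_mul] using
    Real.summable_mul_of_Lp_Lq_of_nonneg .two_two (fun _ => norm_nonneg _)
      (fun _ => norm_nonneg _) hx hy

def HilbertBasis.ofOrthogonal [CompleteSpace E] {v : ι → E}
    (horth : Pairwise fun i j => ⟪v i, v j⟫_𝕜 = 0) (hne : ∀ i, v i ≠ 0)
    (hcomplete : ∀ w : E, (∀ i, ⟪v i, w⟫_𝕜 = 0) → w = 0) :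
    HilbertBasis ι 𝕜 E :=
  .mkOfOrthogonalEqBot (orthonormal_inv_norm_smul horth hne)
    (orthogonal_span_range_smul_eq_bot (fun i => by simpa using hne i) hcomplete)

@[simp]
theorem HilbertBasis.coe_ofOrthogonal [CompleteSpace E] {v : ι → E}
    (horth : Pairwise fun i j => ⟪v i, v j⟫_𝕜 = 0) (hne : ∀ i, v i ≠ 0)
    (hcomplete : ∀ w : E, (∀ i, ⟪v i, w⟫_𝕜 = 0) → w = 0) :
    ⇑(HilbertBasis.ofOrthogonal horth hne hcomplete) = fun i => (‖v i‖⁻¹ : 𝕜) • v i :=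
  HilbertBasis.coe_mkOfOrthogonalEqBot _ _

theorem hasSum_inner_div_sq_norm_mul_inner [CompleteSpace E] {v : ι → E}
    (horth : Pairwise fun i j => ⟪v i, v j⟫_𝕜 = 0) (hne : ∀ i, v i ≠ 0)
    (hcomplete : ∀ w : E, (∀ i, ⟪v i, w⟫_𝕜 = 0) → w = 0) (u w : E) :
    HasSum (fun i => ⟪u, v i⟫_𝕜 / (‖v i‖ : 𝕜) ^ 2 * ⟪v i, w⟫_𝕜) ⟪u, w⟫_𝕜 := by
  simpa only [inner_div_sq_norm_mul_inner, HilbertBasis.coe_ofOrthogonal] using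
    (HilbertBasis.ofOrthogonal horth hne hcomplete).hasSum_inner_mul_inner u w

theorem summable_norm_inner_div_sq_norm_mul_inner [CompleteSpace E] {v : ι → E}
    (horth : Pairwise fun i j => ⟪v i, v j⟫_𝕜 = 0) (hne : ∀ i, v i ≠ 0)
    (hcomplete : ∀ w : E, (∀ i, ⟪v i, w⟫_𝕜 = 0) → w = 0) (u w : E) :
    Summable fun i => ‖⟪u, v i⟫_𝕜 / (‖v i‖ : 𝕜) ^ 2 * ⟪v i, w⟫_𝕜‖ := by
  simpa only [inner_div_sq_norm_mul_inner, HilbertBasis.coe_ofOrthogonal] using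
    (HilbertBasis.ofOrthogonal horth hne hcomplete).summable_norm_inner_mul_inner u w

end OrthogonalExpansion

open MeasureTheory in
theorem statement19_general (a b : ℝ)
    (K : ℝ → Lp ℂ 2 (volume.restrict (Set.Icc a b)))
    (x : ℤ → ℝ)
    (horth : ∀ m n : ℤ, m ≠ n → ⟪K (x m), K (x n)⟫ = 0)
    (hne : ∀ n : ℤ, K (x n) ≠ 0)
    (hcomplete : ∀ v : Lp ℂ 2 (volume.restrict (Set.Icc a b)),
      (∀ n : ℤ, ⟪K (x n), v⟫ = 0) → v = 0)
    (g : Lp ℂ 2 (volume.restrict (Set.Icc a b)))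
    (t : ℝ) :
    HasSum
      (fun n : ℤ =>
        (⟪K t, K (x n)⟫ / ((‖K (x n)‖ : ℂ) ^ 2)) * ⟪K (x n), g⟫)
      ⟪K t, g⟫
    ∧ Summable (fun n : ℤ =>
        ‖(⟪K t, K (x n)⟫ / ((‖K (x n)‖ : ℂ) ^ 2)) * ⟪K (x n), g⟫‖) :=
  ⟨hasSum_inner_div_sq_norm_mul_inner (v := K ∘ x) horth hne hcomplete (K t) g,
    summable_norm_inner_div_sq_norm_mul_inner (v := K ∘ x) horth hne hcomplete (K t) g⟩

open MeasureTheory in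
/-- **Kramer's sampling theorem.** Let `I = [a,b]` be a finite interval and
`K(·,x) ∈ L²(I, dy)` for every `x ∈ ℝ`. If `{K(·, x n)}_{n ∈ ℤ}` is a complete orthogonal
system of nonzero elements of `L²(I, dy)`, then every `f(x) = ⟪K(·,x), g⟫` with
`g ∈ L²(I, dy)` satisfies, for every `x ∈ ℝ`,
`f(x) = Σ_n (⟪K(·,x), K(·,x n)⟫ / ‖K(·,x n)‖²) f(x n)`, the series converging absolutely. -/
theorem statement19 (a b : ℝ) (hab : a ≤ b)
    (K : ℝ → Lp ℂ 2 (volume.restrict (Set.Icc a b)))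
    (x : ℤ → ℝ)
    (horth : ∀ m n : ℤ, m ≠ n → ⟪K (x m), K (x n)⟫ = 0)
    (hne : ∀ n : ℤ, K (x n) ≠ 0)
    (hcomplete : ∀ v : Lp ℂ 2 (volume.restrict (Set.Icc a b)),
      (∀ n : ℤ, ⟪K (x n), v⟫ = 0) → v = 0)
    (g : Lp ℂ 2 (volume.restrict (Set.Icc a b)))
    (t : ℝ) :
    HasSum
      (fun n : ℤ =>
        (⟪K t, K (x n)⟫ / ((‖K (x n)‖ : ℂ) ^ 2)) * ⟪K (x n), g⟫)
      ⟪K t, g⟫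
    ∧ Summable (fun n : ℤ =>
        ‖(⟪K t, K (x n)⟫ / ((‖K (x n)‖ : ℂ) ^ 2)) * ⟪K (x n), g⟫‖) :=
  statement19_general a b K x horth hne hcomplete g t

end
end
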